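/- For every n ≥ 1, f_0(n) ≥ √(n+1)/2, i.e., the cube [-1/2,1/2]^n contains a regular n-simplex of edge length √(n+1)/2 with barycenter at the origin. -/

import Mathlib

open Real Matrix

/-- `simplexInCube n ℓ` : an isometric copy of the regular n-simplex of edge length ℓ
with barycenter at the origin is contained in the cube [-1/2, 1/2]ⁿ. -/
def simplexInCube (n : ℕ) (ℓ : ℝ) : Prop :=
  ∃ p : Fin (n + 1) → EuclideanSpace ℝ (Fin n),
    (∀ i j, i ≠ j → dist (p i) (p j) = ℓ) ∧ (∑ i, p i = 0) ∧
    ∀ i k, |p i k| ≤ 1 / 2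

/-- `f0 n` : the largest edge length of a regular n-simplex with barycenter at the
origin contained in the unit cube. -/
noncomputable def f0 (n : ℕ) : ℝ := sSup {ℓ : ℝ | simplexInCube n ℓ}

/-!
Let `ζ` be a primitive `(n + 1)`-st root of unity and `cas z = Re z + Im z`, so that
`cas (exp (θ * I)) = cos θ + sin θ`. The Hartley matrix `(cas (ζ ^ (i * k)))_{i, k ≤ n}` has
orthogonal rows of squared length `n + 1`: `cas z * cas w = Re (z * conj w) + Im (z * w)`, and
geometric sums over nontrivial `(n + 1)`-st roots of unity vanish. Its column `k = 0` is constant,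
so dropping it leaves `n + 1` points in `ℝⁿ` at pairwise squared distance `2 (n + 1)`, summing to
zero (the other columns are orthogonal to the constant one). Scaling by `1 / (2√2)` gives edge
length `√(n + 1) / 2`, and since `|cas z| ≤ √2` on the unit circle the points lie in the cube.
The supremum defining `f0 n` is finite as soon as `n ≥ 1`: two vertices in the cube are at
distance at most `√n`.
-/

open Finset ComplexConjugate

theorem geom_sum_range_of_pow_eq_one {K : Type*} [DivisionRing K] [DecidableEq K] {u : K}
    {m : ℕ} (hu : u ^ m = 1) : ∑ k ∈ range m, u ^ k = if u = 1 then (m : K) else 0 := by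
  split_ifs with h
  · simp [h]
  · rw [geom_sum_eq h, hu, sub_self, zero_div]

theorem EuclideanSpace.norm_le_of_forall_abs_le {ι : Type*} [Fintype ι]
    {x : EuclideanSpace ℝ ι} {c : ℝ} (h : ∀ k, |x k| ≤ c) :
    ‖x‖ ≤ √(Fintype.card ι * c ^ 2) := by
  rw [EuclideanSpace.norm_eq]
  refine Real.sqrt_le_sqrt ?_
  calc ∑ k, ‖x k‖ ^ 2 ≤ ∑ _k : ι, c ^ 2 :=
        sum_le_sum fun k _ => by
          rw [Real.norm_eq_abs]; exact pow_le_pow_left₀ (abs_nonneg _) (h k) 2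
    _ = Fintype.card ι * c ^ 2 := by simp

theorem bddAbove_simplexInCube {n : ℕ} (hn : 1 ≤ n) : BddAbove {ℓ | simplexInCube n ℓ} := by
  refine ⟨√(n * 1 ^ 2), fun ℓ ⟨p, hdist, _, hcube⟩ => ?_⟩
  have h01 : (0 : Fin (n + 1)) ≠ 1 := by simp [Fin.ext_iff]; omega
  have hcoord : ∀ k, |(p 0 - p 1) k| ≤ 1 := fun k => by
    rw [PiLp.sub_apply]
    linarith [abs_sub (p 0 k) (p 1 k), hcube 0 k, hcube 1 k]
  simpa [← hdist 0 1 h01, dist_eq_norm] using EuclideanSpace.norm_le_of_forall_abs_le hcoord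

namespace Hartley

def cas (z : ℂ) : ℝ := z.re + z.im

theorem cas_one : cas 1 = 1 := by simp [cas]

theorem cas_mul_cas (z w : ℂ) : cas z * cas w = (z * conj w).re + (z * w).im := by
  simp only [cas, Complex.mul_re, Complex.mul_im, Complex.conj_re, Complex.conj_im]
  ring

theorem cas_sq_le (z : ℂ) : cas z ^ 2 ≤ 2 * Complex.normSq z := by
  rw [cas, Complex.normSq_apply]
  nlinarith [sq_nonneg (z.re - z.im)]

theorem abs_cas_le {z : ℂ} (hz : ‖z‖ = 1) : |cas z| ≤ √2 := by
  refine Real.abs_le_sqrt ((cas_sq_le z).trans ?_)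
  rw [Complex.normSq_eq_norm_sq, hz]
  norm_num

variable {ζ : ℂ} {m : ℕ}

theorem sum_cas_mul_cas (hζ : IsPrimitiveRoot ζ m) {i j : ℕ} (hi : i < m) (hj : j < m) :
    ∑ k ∈ range m, cas (ζ ^ (i * k)) * cas (ζ ^ (j * k)) = if i = j then (m : ℝ) else 0 := by
  have hm : m ≠ 0 := by omega
  have hconj : conj (ζ ^ j) = (ζ ^ j)⁻¹ :=
    (Complex.inv_eq_conj (by rw [norm_pow, hζ.norm'_eq_one hm, one_pow])).symm
  have hu : (ζ ^ i * (ζ ^ j)⁻¹) ^ m = 1 := by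
    rw [mul_pow, inv_pow, ← pow_mul, ← pow_mul, mul_comm i, mul_comm j, pow_mul, pow_mul,
      hζ.pow_eq_one, one_pow, one_pow, inv_one, mul_one]
  have hv : (ζ ^ (i + j)) ^ m = 1 := by
    rw [← pow_mul, mul_comm, pow_mul, hζ.pow_eq_one, one_pow]
  have hu1 : ζ ^ i * (ζ ^ j)⁻¹ = 1 ↔ i = j := by
    rw [mul_inv_eq_one₀ (pow_ne_zero _ (hζ.ne_zero hm))]
    exact ⟨fun h => hζ.pow_inj hi hj h, fun h => h ▸ rfl⟩
  calc ∑ k ∈ range m, cas (ζ ^ (i * k)) * cas (ζ ^ (j * k))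
      = (∑ k ∈ range m, (ζ ^ i * (ζ ^ j)⁻¹) ^ k).re
          + (∑ k ∈ range m, (ζ ^ (i + j)) ^ k).im := by
        simp only [cas_mul_cas, Complex.re_sum, Complex.im_sum, ← sum_add_distrib, pow_mul,
          map_pow, hconj, mul_pow, inv_pow, pow_add]
    _ = if i = j then (m : ℝ) else 0 := by
        rw [geom_sum_range_of_pow_eq_one hu, geom_sum_range_of_pow_eq_one hv]
        simp only [hu1, apply_ite Complex.re, apply_ite Complex.im, Complex.natCast_re,
          Complex.natCast_im, Complex.zero_re, Complex.zero_im, ite_self, add_zero]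

theorem sum_sub_cas_sq (hζ : IsPrimitiveRoot ζ m) {i j : ℕ} (hi : i < m) (hj : j < m)
    (hij : i ≠ j) : ∑ k ∈ range m, (cas (ζ ^ (i * k)) - cas (ζ ^ (j * k))) ^ 2 = 2 * m := by
  have hii := sum_cas_mul_cas hζ hi hi
  have hjj := sum_cas_mul_cas hζ hj hj
  have hij' := sum_cas_mul_cas hζ hi hj
  rw [if_pos rfl] at hii hjj
  rw [if_neg hij] at hij'
  have hexpand : ∀ a b : ℝ, (a - b) ^ 2 = a * a + b * b - 2 * (a * b) := fun a b => by ring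
  simp only [hexpand, sum_sub_distrib, sum_add_distrib, ← mul_sum, hii, hjj, hij']
  ring

theorem sum_cas_eq_zero (hζ : IsPrimitiveRoot ζ m) {k : ℕ} (hk0 : k ≠ 0) (hk : k < m) :
    ∑ i ∈ range m, cas (ζ ^ (i * k)) = 0 := by
  simpa [mul_comm _ k, cas_one, hk0] using sum_cas_mul_cas hζ hk (by omega : 0 < m)

noncomputable def simplex (ζ : ℂ) (n : ℕ) (i : Fin (n + 1)) : EuclideanSpace ℝ (Fin n) :=
  WithLp.toLp 2 fun k => cas (ζ ^ ((i : ℕ) * (k + 1))) / (2 * √2)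

variable {n : ℕ}

theorem dist_simplex (hζ : IsPrimitiveRoot ζ (n + 1)) {i j : Fin (n + 1)} (hij : i ≠ j) :
    dist (simplex ζ n i) (simplex ζ n j) = √(n + 1) / 2 := by
  have hsum : ∑ k : Fin n, (cas (ζ ^ ((i : ℕ) * (k + 1))) - cas (ζ ^ ((j : ℕ) * (k + 1)))) ^ 2
      = 2 * (n + 1) := by
    rw [Fin.sum_univ_eq_sum_range (fun k => (cas (ζ ^ ((i : ℕ) * (k + 1)))
      - cas (ζ ^ ((j : ℕ) * (k + 1)))) ^ 2), ← add_zero (∑ k ∈ range n, _)]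
    have := sum_sub_cas_sq hζ i.isLt j.isLt (Fin.val_ne_of_ne hij)
    rw [sum_range_succ'] at this
    simpa using this
  have h8 : (2 * √2) ^ 2 = 8 := by rw [mul_pow, Real.sq_sqrt zero_le_two]; norm_num
  rw [EuclideanSpace.dist_eq]
  simp only [simplex, Real.dist_eq, sq_abs, ← sub_div, div_pow, h8, ← sum_div, hsum]
  rw [show 2 * ((n : ℝ) + 1) / 8 = (n + 1) / 2 ^ 2 by ring, Real.sqrt_div' _ (by positivity),
    Real.sqrt_sq zero_le_two]

theorem sum_simplex_eq_zero (hζ : IsPrimitiveRoot ζ (n + 1)) : ∑ i, simplex ζ n i = 0 := by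
  ext k
  simp only [simplex, WithLp.ofLp_sum, Finset.sum_apply, ← sum_div, PiLp.zero_apply]
  rw [Fin.sum_univ_eq_sum_range (fun i => cas (ζ ^ (i * ((k : ℕ) + 1)))),
    sum_cas_eq_zero hζ k.val.succ_ne_zero (by omega), zero_div]

theorem abs_simplex_le (hζ : IsPrimitiveRoot ζ (n + 1)) (i : Fin (n + 1)) (k : Fin n) :
    |simplex ζ n i k| ≤ 1 / 2 := by
  have hcas := abs_cas_le (z := ζ ^ ((i : ℕ) * (k + 1)))
    (by rw [norm_pow, hζ.norm'_eq_one n.succ_ne_zero, one_pow])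
  rw [simplex, PiLp.toLp_apply, abs_div, abs_of_pos (by positivity : (0 : ℝ) < 2 * √2),
    div_le_div_iff₀ (by positivity) two_pos]
  linarith

end Hartley

theorem simplexInCube_sqrt_succ_div_two (n : ℕ) : simplexInCube n (√(n + 1) / 2) :=
  have hζ := Complex.isPrimitiveRoot_exp (n + 1) n.succ_ne_zero
  ⟨Hartley.simplex _ n, fun _ _ hij => Hartley.dist_simplex hζ hij,
    Hartley.sum_simplex_eq_zero hζ, Hartley.abs_simplex_le hζ⟩

theorem stmt5 (n : ℕ) (hn : 1 ≤ n) : f0 n ≥ Real.sqrt (n + 1) / 2 :=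
  le_csSup (bddAbove_simplexInCube hn) (simplexInCube_sqrt_succ_div_two n)
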